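/- Let 1/2 ≤ t < 1 and let Q ⊂ ℝⁿ be a cube. Then for every measurable function f, m_{|f − m_f(t,Q)|}(1 − (1−t)/2ⁿ, Q) ≤ 2 · inf_{c ∈ ℝ} m_{|f − c|}(1 − (1−t)/2ⁿ, Q). -/

import Mathlib

/-!
Put `s = 1 - (1-t)/2ⁿ`; then `t ≤ s` and, as `t ≥ 1/2`, also `1 - s ≤ t`. Fix `c`. From
`c - |f - c| ≤ f ≤ c + |f - c|` and monotonicity of medians, `t ≤ s` gives
`m_f(t,Q) ≤ c + m_{|f-c|}(s,Q)`, while `1 - s ≤ t` gives `c - m_{|f-c|}(s,Q) ≤ m_f(t,Q)`: the set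
where `|f - c| < m_{|f-c|}(s,Q) + ε` has measure `> s|Q|`, so `f` lies far below `c` on a set of
measure `< (1-s)|Q| ≤ t|Q|`. Thus `|m_f(t,Q) - c| ≤ m_{|f-c|}(s,Q)`, and the pointwise bound
`|f - m_f(t,Q)| ≤ |m_f(t,Q) - c| + |f - c|` yields the factor `2`.
-/

open MeasureTheory ENNReal

namespace LocalMedian

/-- Euclidean space `ℝⁿ`. -/
abbrev Sp (n : ℕ) := EuclideanSpace ℝ (Fin n)

/-- An axis-parallel cube in `ℝⁿ`, given by its lower corner and (positive) sidelength. -/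
structure Cube (n : ℕ) where
  corner : Sp n
  side : ℝ
  side_pos : 0 < side

namespace Cube

variable {n : ℕ}

/-- The set of points of the cube. -/
def set (Q : Cube n) : Set (Sp n) :=
  {x | ∀ i, Q.corner i ≤ x i ∧ x i ≤ Q.corner i + Q.side}

/-- The center of the cube. -/
noncomputable def center (Q : Cube n) : Sp n := WithLp.toLp 2 (fun i => Q.corner i + Q.side / 2)

/-- The cube concentric with `Q` whose sidelength is `r` times that of `Q`. -/
noncomputable def dilate (Q : Cube n) (r : ℝ) (hr : 0 < r) : Cube n where
  corner := WithLp.toLp 2 (fun i => Q.center i - r * Q.side / 2)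
  side := r * Q.side
  side_pos := mul_pos hr Q.side_pos

/-- `Q` is a dyadic subcube of `Q₀`, i.e. obtained from `Q₀` by repeated dyadic
subdivision into `2ⁿ` congruent subcubes. -/
def dyadicSub (Q₀ Q : Cube n) : Prop :=
  ∃ (k : ℕ) (m : Fin n → ℕ), (∀ i, m i < 2 ^ k) ∧
    Q.side = Q₀.side / 2 ^ k ∧ ∀ i, Q.corner i = Q₀.corner i + Q.side * m i

/-- `Q` is one of the `2ⁿ` dyadic children of `P` (so `P` is the dyadic parent of `Q`). -/
def isDyadicChild (Q P : Cube n) : Prop :=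
  Q.side = P.side / 2 ∧ ∃ m : Fin n → ℕ, (∀ i, m i < 2) ∧
    ∀ i, Q.corner i = P.corner i + Q.side * m i

end Cube

variable {n : ℕ}

/-- The (maximal) median of `f` over the cube `Q` with parameter `t`:
`m_f(t,Q) = sup { M : |{y ∈ Q : f y < M}| ≤ t|Q| }`. -/
noncomputable def median (f : Sp n → ℝ) (t : ℝ) (Q : Cube n) : ℝ :=
  sSup {M : ℝ | volume {y ∈ Q.set | f y < M} ≤ ENNReal.ofReal t * volume Q.set}

/-- The local oscillation `inf_c inf {α ≥ 0 : |{y ∈ Q : |f y - c| > α}| < s|Q|}`. -/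
noncomputable def osc (f : Sp n → ℝ) (s : ℝ) (Q : Cube n) : ℝ :=
  ⨅ c : ℝ, sInf {α : ℝ | 0 ≤ α ∧
    volume {y ∈ Q.set | α < |f y - c|} < ENNReal.ofReal s * volume Q.set}

/-- The local sharp maximal function `M♯_{0,s,Q₀} f`, restricted to the cube `Q₀`. -/
noncomputable def sharpLoc (f : Sp n → ℝ) (s : ℝ) (Q₀ : Cube n) (x : Sp n) : ℝ≥0∞ :=
  ⨆ Q : {Q : Cube n // x ∈ Q.set ∧ Q.set ⊆ Q₀.set}, ENNReal.ofReal (osc f s Q.1)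

/-- The local sharp maximal function `M♯_{0,s} f` (over all cubes containing `x`). -/
noncomputable def sharp (f : Sp n → ℝ) (s : ℝ) (x : Sp n) : ℝ≥0∞ :=
  ⨆ Q : {Q : Cube n // x ∈ Q.set}, ENNReal.ofReal (osc f s Q.1)

/-- The Hardy–Littlewood maximal function (over cubes containing `x`). -/
noncomputable def maximal (f : Sp n → ℝ) (x : Sp n) : ℝ≥0∞ :=
  ⨆ Q : {Q : Cube n // x ∈ Q.set},
    (∫⁻ y in Q.1.set, ENNReal.ofReal |f y|) / volume Q.1.set

/-- The Hardy–Littlewood maximal function of an `ℝ≥0∞`-valued function. -/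
noncomputable def maximalE (g : Sp n → ℝ≥0∞) (x : Sp n) : ℝ≥0∞ :=
  ⨆ Q : {Q : Cube n // x ∈ Q.set}, (∫⁻ y in Q.1.set, g y) / volume Q.1.set

/-- The average `(1/|Q|) ∫_Q g`. -/
noncomputable def cubeAvg (g : Sp n → ℝ) (Q : Cube n) : ℝ :=
  (volume Q.set).toReal⁻¹ * ∫ y in Q.set, g y

/-- The Fefferman–Stein sharp maximal function
`M♯ g(x) = sup_{Q ∋ x} (1/|Q|) ∫_Q |g - g_Q|`. -/
noncomputable def fsSharp (g : Sp n → ℝ) (x : Sp n) : ℝ≥0∞ :=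
  ⨆ Q : {Q : Cube n // x ∈ Q.set},
    ENNReal.ofReal (cubeAvg (fun y => |g y - cubeAvg g Q.1|) Q.1)

namespace Cube

lemma set_eq_preimage_pi (Q : Cube n) :
    Q.set = (MeasurableEquiv.toLp 2 (Fin n → ℝ)).symm ⁻¹'
      Set.univ.pi fun i => Set.Icc (Q.corner i) (Q.corner i + Q.side) := by
  ext x
  simp [Cube.set, MeasurableEquiv.coe_toLp_symm, Pi.le_def, forall_and]

lemma measurableSet_set (Q : Cube n) : MeasurableSet Q.set := by
  rw [set_eq_preimage_pi]
  exact (MeasurableEquiv.toLp 2 (Fin n → ℝ)).symm.measurable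
    (MeasurableSet.univ_pi fun _ => measurableSet_Icc)

lemma volume_set (Q : Cube n) : volume Q.set = ENNReal.ofReal Q.side ^ n := by
  rw [set_eq_preimage_pi,
    (EuclideanSpace.volume_preserving_symm_measurableEquiv_toLp (Fin n)).measure_preimage
      (MeasurableSet.univ_pi fun _ => measurableSet_Icc).nullMeasurableSet,
    volume_pi_pi]
  simp [Real.volume_Icc]

lemma volume_set_ne_zero (Q : Cube n) : volume Q.set ≠ 0 := by
  simp [volume_set, Q.side_pos]

lemma volume_set_ne_top (Q : Cube n) : volume Q.set ≠ ∞ := by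
  simp [volume_set]

end Cube

section Median

variable {Q : Cube n} {g h : Sp n → ℝ} {s t M : ℝ}

lemma nonempty_medianSet (hg : Measurable g) (hs : 0 < s) :
    {M : ℝ | volume {y ∈ Q.set | g y < M} ≤ ENNReal.ofReal s * volume Q.set}.Nonempty := by
  have hpos : 0 < ENNReal.ofReal s * volume Q.set :=
    ENNReal.mul_pos (by simpa using hs) Q.volume_set_ne_zero
  have hempty : (⋂ M : ℝ, {y ∈ Q.set | g y < M}) = ∅ :=
    Set.eq_empty_of_forall_notMem fun y hy => (Set.mem_iInter.mp hy (g y)).2.false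
  have htendsto := tendsto_measure_iInter_atBot (μ := volume)
    (s := fun M : ℝ => {y ∈ Q.set | g y < M}) (fun M => (Q.measurableSet_set.inter (hg measurableSet_Iio)).nullMeasurableSet)
    (fun M M' hMM' y hy => ⟨hy.1, hy.2.trans_le hMM'⟩)
    ⟨0, ne_top_of_le_ne_top Q.volume_set_ne_top (measure_mono fun _ hy => hy.1)⟩
  rw [hempty, measure_empty] at htendsto
  obtain ⟨M, hM⟩ := (htendsto.eventually (eventually_lt_nhds hpos)).exists
  exact ⟨M, hM.le⟩

lemma bddAbove_medianSet (hs : s < 1) :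
    BddAbove {M : ℝ | volume {y ∈ Q.set | g y < M} ≤ ENNReal.ofReal s * volume Q.set} := by
  have hlt : ENNReal.ofReal s * volume Q.set < volume Q.set := by
    simpa using (ENNReal.mul_lt_mul_iff_left Q.volume_set_ne_zero Q.volume_set_ne_top).mpr
      (ENNReal.ofReal_lt_one.mpr hs)
  have hunion : (⋃ M : ℝ, {y ∈ Q.set | g y < M}) = Q.set :=
    Set.Subset.antisymm (Set.iUnion_subset fun _ _ hy => hy.1)
      fun y hy => Set.mem_iUnion.mpr ⟨g y + 1, hy, lt_add_one _⟩
  have htendsto := tendsto_measure_iUnion_atTop (μ := volume)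
    (s := fun M : ℝ => {y ∈ Q.set | g y < M}) (fun M M' hMM' y hy => ⟨hy.1, hy.2.trans_le hMM'⟩)
  rw [hunion] at htendsto
  obtain ⟨M₀, hM₀⟩ := (htendsto.eventually (eventually_gt_nhds hlt)).exists
  refine ⟨M₀, fun M hM => le_of_not_gt fun hM₀M => ?_⟩
  have hsub : {y ∈ Q.set | g y < M₀} ⊆ {y ∈ Q.set | g y < M} :=
    fun y hy => ⟨hy.1, hy.2.trans hM₀M⟩
  exact (hM₀.trans_le (measure_mono hsub)).not_ge hM

lemma le_median (hs : s < 1)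
    (hM : volume {y ∈ Q.set | g y < M} ≤ ENNReal.ofReal s * volume Q.set) :
    M ≤ median g s Q :=
  le_csSup (bddAbove_medianSet hs) hM

lemma lt_volume_of_median_lt (hs : s < 1) (hM : median g s Q < M) :
    ENNReal.ofReal s * volume Q.set < volume {y ∈ Q.set | g y < M} :=
  lt_of_not_ge fun h => (le_median hs h).not_gt hM

lemma median_mono (hg : Measurable g) (hs : 0 < s) (ht : t < 1) (hst : s ≤ t)
    (hgh : ∀ y, g y ≤ h y) : median g s Q ≤ median h t Q := by
  refine csSup_le_csSup (bddAbove_medianSet ht) (nonempty_medianSet hg hs) fun M hM => ?_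
  calc volume {y ∈ Q.set | h y < M}
      ≤ volume {y ∈ Q.set | g y < M} := measure_mono fun y hy => ⟨hy.1, (hgh y).trans_lt hy.2⟩
    _ ≤ ENNReal.ofReal s * volume Q.set := hM
    _ ≤ ENNReal.ofReal t * volume Q.set := by gcongr

lemma median_const_add (hg : Measurable g) (hs0 : 0 < s) (hs1 : s < 1) (a : ℝ) :
    median (fun y => a + g y) s Q = a + median g s Q := by
  have himage : {M : ℝ | volume {y ∈ Q.set | a + g y < M} ≤ ENNReal.ofReal s * volume Q.set}
      = OrderIso.addLeft a ''
        {M : ℝ | volume {y ∈ Q.set | g y < M} ≤ ENNReal.ofReal s * volume Q.set} := by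
    rw [OrderIso.image_eq_preimage_symm]
    ext M
    simp [lt_neg_add_iff_add_lt]
  rw [median, himage, ← OrderIso.map_csSup' _ (nonempty_medianSet hg hs0) (bddAbove_medianSet hs1)]
  rfl

lemma const_sub_median_le_median_const_sub (hg : Measurable g) (hs : s < 1) (ht : t < 1)
    (hst : 1 - s ≤ t) (a : ℝ) :
    a - median g s Q ≤ median (fun y => a - g y) t Q := by
  refine le_of_forall_sub_le fun ε hε => le_median ht ?_
  set A := {y ∈ Q.set | g y < median g s Q + ε}
  have hA : ENNReal.ofReal s * volume Q.set < volume A :=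
    lt_volume_of_median_lt hs (lt_add_of_pos_right _ hε)
  have hAQ : A ⊆ Q.set := fun _ hy => hy.1
  calc volume {y ∈ Q.set | a - g y < a - median g s Q - ε}
      ≤ volume (Q.set \ A) :=
        measure_mono fun y hy => ⟨hy.1, fun hyA => by linarith [hy.2, hyA.2]⟩
    _ = volume Q.set - volume A :=
        measure_sdiff hAQ (Q.measurableSet_set.inter (hg measurableSet_Iio)).nullMeasurableSet
          (ne_top_of_le_ne_top Q.volume_set_ne_top (measure_mono hAQ))
    _ ≤ volume Q.set - ENNReal.ofReal s * volume Q.set := tsub_le_tsub_left hA.le _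
    _ ≤ ENNReal.ofReal t * volume Q.set := by
        rw [tsub_le_iff_right, ← add_mul]
        calc volume Q.set = 1 * volume Q.set := (one_mul _).symm
          _ ≤ ENNReal.ofReal (t + s) * volume Q.set := by
              gcongr
              exact ENNReal.one_le_ofReal.mpr (by linarith)
          _ ≤ (ENNReal.ofReal t + ENNReal.ofReal s) * volume Q.set := by
              gcongr
              exact ENNReal.ofReal_add_le

end Median

section AbsDeviation

variable {Q : Cube n} {f : Sp n → ℝ} {s t : ℝ}

lemma median_le_add_median_abs_sub (hf : Measurable f) (ht : 0 < t) (hs : s < 1) (hts : t ≤ s)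
    (c : ℝ) : median f t Q ≤ c + median (fun y => |f y - c|) s Q := by
  rw [← median_const_add (by fun_prop) (ht.trans_le hts) hs]
  exact median_mono hf ht hs hts fun y => by linarith [le_abs_self (f y - c)]

lemma sub_median_abs_sub_le_median (hf : Measurable f) (hs : s < 1) (ht : t < 1)
    (hst : 1 - s ≤ t) (c : ℝ) : c - median (fun y => |f y - c|) s Q ≤ median f t Q :=
  (const_sub_median_le_median_const_sub (by fun_prop) hs ht hst c).trans <|
    median_mono (by fun_prop) (by linarith) ht le_rfl fun y => by
      linarith [neg_abs_le (f y - c)]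

lemma abs_median_sub_le_median_abs_sub (hf : Measurable f) (hs : s < 1) (hts : t ≤ s)
    (hst : 1 - s ≤ t) (c : ℝ) : |median f t Q - c| ≤ median (fun y => |f y - c|) s Q :=
  abs_sub_le_iff.mpr
    ⟨by linarith [median_le_add_median_abs_sub (Q := Q) hf (by linarith) hs hts c],
      by linarith [sub_median_abs_sub_le_median (Q := Q) hf hs (hts.trans_lt hs) hst c]⟩

lemma median_abs_sub_median_le_two_mul (hf : Measurable f) (hs : s < 1) (hts : t ≤ s)
    (hst : 1 - s ≤ t) (c : ℝ) :
    median (fun y => |f y - median f t Q|) s Q ≤ 2 * median (fun y => |f y - c|) s Q := by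
  set M := median f t Q
  have hs0 : 0 < s := by linarith
  calc median (fun y => |f y - M|) s Q ≤ median (fun y => |M - c| + |f y - c|) s Q :=
        median_mono (by fun_prop) hs0 hs le_rfl fun y => by
          linarith [abs_sub_le (f y) c M, abs_sub_comm c M]
    _ = |M - c| + median (fun y => |f y - c|) s Q := median_const_add (by fun_prop) hs0 hs _
    _ ≤ 2 * median (fun y => |f y - c|) s Q := by
        linarith [abs_median_sub_le_median_abs_sub (Q := Q) hf hs hts hst c]

end AbsDeviation

/-- Let `1/2 ≤ t < 1` and let `Q ⊂ ℝⁿ` be a cube. Then for every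
measurable `f`:
`m_{|f − m_f(t,Q)|}(1 − (1−t)/2ⁿ, Q) ≤ 2 inf_{c ∈ ℝ} m_{|f − c|}(1 − (1−t)/2ⁿ, Q)`. -/
theorem statement15 {n : ℕ} (t : ℝ) (ht0 : 1 / 2 ≤ t) (ht1 : t < 1)
    (Q : Cube n) (f : Sp n → ℝ) (hf : Measurable f) :
    median (fun y => |f y - median f t Q|) (1 - (1 - t) / 2 ^ n) Q
      ≤ 2 * ⨅ c : ℝ, median (fun y => |f y - c|) (1 - (1 - t) / 2 ^ n) Q := by
  have hdiv_pos : 0 < (1 - t) / 2 ^ n := div_pos (by linarith) (by positivity)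
  have hdiv_le : (1 - t) / 2 ^ n ≤ 1 - t := div_le_self (by linarith) (one_le_pow₀ one_le_two)
  have hbound c := median_abs_sub_median_le_two_mul (Q := Q) hf (c := c)
    (t := t) (s := 1 - (1 - t) / 2 ^ n) (by linarith) (by linarith) (by linarith)
  exact (div_le_iff₀' two_pos).mp (le_ciInf fun c => (div_le_iff₀' two_pos).mpr (hbound c))

end LocalMedian
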